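/- For every p ≥ 2 and every L > 0 there exist unit vectors x, y in the Euclidean space ℝ^p with x ≠ y such that 2·κ(1) − 2·κ(⟨x, y⟩) > L² · ‖x − y‖². In other words, the kernel mapping of the two-layer ReLU NTK, restricted to the unit sphere, is not Lipschitz for any constant L. -/

import Mathlib

open Real

noncomputable def kappa0 (u : ℝ) : ℝ := (π - Real.arccos u) / π
noncomputable def kappa1 (u : ℝ) : ℝ :=
  (u * (π - Real.arccos u) + Real.sqrt (1 - u ^ 2)) / π
noncomputable def kappa (u : ℝ) : ℝ := u * kappa0 u + kappa1 u

/-! Near `u = 1` the gap `kappa 1 - kappa u` is bounded below by a multiple of `√(1 - u)`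
(this comes from `√(1 - u²) ≤ arccos u`), whereas for unit vectors with `⟪x, y⟫ = u` the
squared distance `‖x - y‖² = 2 - 2u` is linear in `1 - u`. Taking `u = 1 - δ²` with `δ` small
makes the kernel gap beat any `L² ‖x - y‖²`. -/

lemma pi_mul_kappa (u : ℝ) : π * kappa u = 2 * u * (π - arccos u) + √(1 - u ^ 2) := by
  simp only [kappa, kappa0, kappa1]
  field_simp
  ring

lemma kappa_one : kappa 1 = 2 := by
  have h := pi_mul_kappa 1
  norm_num at h
  exact mul_left_cancel₀ pi_ne_zero (by linarith)

lemma mul_sqrt_one_sub_sq_le_pi_mul_kappa_one_sub {u : ℝ} (hu₀ : 0 ≤ u) (hu₁ : u ≤ 1) :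
    (2 * u - 1) * √(1 - u ^ 2) ≤ π * (kappa 1 - kappa u) := by
  have hsqrt : √(1 - u ^ 2) ≤ arccos u := by
    simpa only [sin_arccos] using sin_le (arccos_nonneg u)
  rw [mul_sub, kappa_one, pi_mul_kappa]
  nlinarith [mul_le_mul_of_nonneg_left hsqrt hu₀, mul_nonneg (sub_nonneg.2 hu₁) pi_pos.le]

lemma le_two_mul_pi_mul_kappa_one_sub {δ : ℝ} (hδ₀ : 0 ≤ δ) (hδ : δ ≤ 1 / 2) :
    δ ≤ 2 * π * (kappa 1 - kappa (1 - δ ^ 2)) := by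
  have hδsq : δ ^ 2 ≤ 1 / 4 := by nlinarith
  have hδ_le_sqrt : δ ≤ √(1 - (1 - δ ^ 2) ^ 2) :=
    le_sqrt_of_sq_le (by nlinarith [mul_nonneg (sq_nonneg δ) (by linarith : 0 ≤ 1 - δ ^ 2)])
  have hgap := mul_sqrt_one_sub_sq_le_pi_mul_kappa_one_sub (u := 1 - δ ^ 2)
    (by linarith) (by nlinarith)
  nlinarith [mul_le_mul_of_nonneg_left hδ_le_sqrt (by linarith : 0 ≤ 1 - 2 * δ ^ 2)]

lemma Orthonormal.exists_norm_eq_one_inner_eq {ι E : Type*} [NormedAddCommGroup E]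
    [InnerProductSpace ℝ E] {v : ι → E} (hv : Orthonormal ℝ v) {i j : ι} (hij : i ≠ j)
    {u : ℝ} (hu : u ^ 2 ≤ 1) : ∃ y : E, ‖y‖ = 1 ∧ inner ℝ (v i) y = u := by
  have hvi : ‖v i‖ = 1 := hv.1 i
  have hvj : ‖v j‖ = 1 := hv.1 j
  have hvij : inner ℝ (v i) (v j) = 0 := hv.2 hij
  refine ⟨u • v i + √(1 - u ^ 2) • v j, ?_, ?_⟩
  · have hsq : ‖u • v i + √(1 - u ^ 2) • v j‖ ^ 2 = 1 := by
      rw [norm_add_sq_real, norm_smul, norm_smul, inner_smul_left, inner_smul_right, hvij,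
        hvi, hvj]
      simp only [Real.norm_eq_abs, mul_one, mul_zero, add_zero, sq_abs]
      rw [sq_sqrt (by linarith)]
      ring
    rwa [pow_eq_one_iff_of_nonneg (norm_nonneg _) two_ne_zero] at hsq
  · rw [inner_add_right, inner_smul_right, inner_smul_right, hvij, real_inner_self_eq_norm_sq,
      hvi]
    ring

lemma EuclideanSpace.exists_norm_eq_one_inner_eq {p : ℕ} (hp : 2 ≤ p) {u : ℝ}
    (hu : u ^ 2 ≤ 1) :
    ∃ x y : EuclideanSpace ℝ (Fin p), ‖x‖ = 1 ∧ ‖y‖ = 1 ∧ inner ℝ x y = u := by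
  have hv := (EuclideanSpace.basisFun (Fin p) ℝ).orthonormal
  obtain ⟨y, hy, hxy⟩ := hv.exists_norm_eq_one_inner_eq
    (i := ⟨0, by omega⟩) (j := ⟨1, by omega⟩) (by simp) hu
  exact ⟨_, y, hv.1 _, hy, hxy⟩

theorem ntk_not_lipschitz_general (p : ℕ) (hp : 2 ≤ p) (L : ℝ) :
    ∃ x y : EuclideanSpace ℝ (Fin p), ‖x‖ = 1 ∧ ‖y‖ = 1 ∧ x ≠ y ∧
      2 * kappa 1 - 2 * kappa (inner ℝ x y : ℝ) > L ^ 2 * ‖x - y‖ ^ 2 := by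
  set δ : ℝ := 1 / (2 + 2 * π * L ^ 2)
  have hden : 0 < 2 + 2 * π * L ^ 2 := by positivity
  have hδ₀ : 0 < δ := by positivity
  have hδ : δ ≤ 1 / 2 := one_div_le_one_div_of_le two_pos (by nlinarith [pi_pos, sq_nonneg L])
  have hLδ : 2 * π * L ^ 2 * δ < 1 := by
    simp only [δ]
    rw [mul_one_div, div_lt_one hden]
    linarith
  have hδsq : δ ^ 2 ≤ 1 / 4 := by nlinarith
  obtain ⟨x, y, hx, hy, hxy⟩ :=
    EuclideanSpace.exists_norm_eq_one_inner_eq hp (u := 1 - δ ^ 2) (by nlinarith [sq_nonneg δ])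
  have hne : x ≠ y := by
    rintro rfl
    rw [real_inner_self_eq_norm_sq, hx] at hxy
    nlinarith
  refine ⟨x, y, hx, hy, hne, ?_⟩
  have hdist : ‖x - y‖ ^ 2 = 2 * δ ^ 2 := by
    rw [norm_sub_sq_real, hx, hy, hxy]
    ring
  rw [hxy, hdist, gt_iff_lt]
  calc L ^ 2 * (2 * δ ^ 2) = 2 * π * L ^ 2 * δ * δ / π := by field_simp
    _ < δ / π := by gcongr; exact mul_lt_of_lt_one_left hδ₀ hLδ
    _ ≤ 2 * kappa 1 - 2 * kappa (1 - δ ^ 2) := by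
      rw [div_le_iff₀ pi_pos]
      linarith [le_two_mul_pi_mul_kappa_one_sub hδ₀.le hδ]

theorem ntk_not_lipschitz (p : ℕ) (hp : 2 ≤ p) (L : ℝ) (hL : 0 < L) :
    ∃ x y : EuclideanSpace ℝ (Fin p), ‖x‖ = 1 ∧ ‖y‖ = 1 ∧ x ≠ y ∧
      2 * kappa 1 - 2 * kappa (inner ℝ x y : ℝ) > L ^ 2 * ‖x - y‖ ^ 2 :=
  ntk_not_lipschitz_general p hp L
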